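/- arXiv:1912.00168 — 3 statements merged into one kernel-verified Lean document; each statement's English description precedes it below -/
import Mathlib

section
/- Under the flocking dynamics, at any time t ≥ 0 with V(t) > 0, the function V is differentiable at t and its derivative satisfies −(K/σ^{2β})·k·V(t) + B(t) ≤ V'(t) ≤ −(K·k/(σ² + 2·X(t)²)^β)·V(t) + B(t), where B(t) = Σ_{1≤j<i≤k} (f0(‖x_i(t) − x_j(t)‖²) − f1(‖x_i(t) − x_j(t)‖²))·⟨x_i(t) − x_j(t), v_i(t) − v_j(t)⟩. -/
/-!
The deviations `v i - vbar` sum to zero, so `(V²)' = 2 ∑ᵢ ⟪v i - vbar, v i'⟫`. Symmetrising over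
pairs turns this into `2 (-∑_{j<i} a i j ‖v i - v j‖² + Λ B)`, and the Lagrange identity
`∑_{j<i} ‖v i - v j‖² = k V²` shows `Λ = V`. Finally `‖x i - x j‖² ≤ 2 X²` pins every weight
`a i j` between `K / (σ² + 2 X²)^β` and `K / σ^(2β)`.
-/

open scoped RealInnerProductSpace
open Finset

theorem norm_sub_sq_le_two_mul_sum_norm_sub_sq {ι E : Type*} [Fintype ι]
    [SeminormedAddCommGroup E] (w : ι → E) (m : E) (i j : ι) :
    ‖w i - w j‖ ^ 2 ≤ 2 * ∑ l, ‖w l - m‖ ^ 2 := by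
  classical
  rcases eq_or_ne i j with rfl | hij
  · rw [sub_self, norm_zero, zero_pow two_ne_zero]
    positivity
  have hpair : ‖w i - m‖ ^ 2 + ‖w j - m‖ ^ 2 ≤ ∑ l, ‖w l - m‖ ^ 2 := by
    rw [← sum_pair (f := fun l => ‖w l - m‖ ^ 2) hij]
    exact sum_le_sum_of_subset_of_nonneg (subset_univ _) fun l _ _ => sq_nonneg _
  calc ‖w i - w j‖ ^ 2 ≤ (‖w i - m‖ + ‖w j - m‖) ^ 2 := by
        gcongr
        simpa using norm_sub_le (w i - m) (w j - m)
    _ ≤ 2 * (‖w i - m‖ ^ 2 + ‖w j - m‖ ^ 2) := add_sq_le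
    _ ≤ 2 * ∑ l, ‖w l - m‖ ^ 2 := by gcongr

theorem div_rpow_add_le_div_rpow_add {K s r R β : ℝ} (hK : 0 ≤ K) (hs : 0 < s) (hβ : 0 ≤ β)
    (hr : 0 ≤ r) (hrR : r ≤ R) : K / (s + R) ^ β ≤ K / (s + r) ^ β :=
  div_le_div_of_nonneg_left hK (by positivity) (Real.rpow_le_rpow (by positivity) (by linarith) hβ)

theorem div_rpow_sq_add_le_div_rpow {K σ r β : ℝ} (hK : 0 ≤ K) (hσ : 0 < σ) (hβ : 0 ≤ β)
    (hr : 0 ≤ r) : K / (σ ^ 2 + r) ^ β ≤ K / σ ^ (2 * β) := by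
  simpa [Real.rpow_mul hσ.le] using div_rpow_add_le_div_rpow_add hK (pow_pos hσ 2) hβ le_rfl hr

section Pairwise

variable {ι E : Type*} [Fintype ι] [NormedAddCommGroup E] [InnerProductSpace ℝ E]

theorem sum_sub_average_eq_zero (w : ι → E) :
    ∑ i, (w i - (Fintype.card ι : ℝ)⁻¹ • ∑ j, w j) = 0 := by
  rcases isEmpty_or_nonempty ι with hι | hι
  · simp
  rw [sum_sub_distrib, sum_const, card_univ, ← Nat.cast_smul_eq_nsmul ℝ, smul_smul,
    mul_inv_cancel₀ (by positivity), one_smul, sub_self]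

theorem HasDerivAt.sum_norm_sub_average_sq {v : ι → ℝ → E} {v' : ι → E} {t : ℝ}
    (hv : ∀ i, HasDerivAt (v i) (v' i) t) :
    HasDerivAt (fun s => ∑ i, ‖v i s - (Fintype.card ι : ℝ)⁻¹ • ∑ j, v j s‖ ^ 2)
      (2 * ∑ i, ⟪v i t - (Fintype.card ι : ℝ)⁻¹ • ∑ j, v j t, v' i⟫) t := by
  have hmean : HasDerivAt (fun s => (Fintype.card ι : ℝ)⁻¹ • ∑ j, v j s)
      ((Fintype.card ι : ℝ)⁻¹ • ∑ j, v' j) t :=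
    (HasDerivAt.fun_sum fun j _ => hv j).const_smul _
  refine (HasDerivAt.fun_sum fun i (_ : i ∈ univ) => ((hv i).sub hmean).norm_sq).congr_deriv ?_
  rw [← mul_sum]
  simp only [Pi.sub_apply, inner_sub_right]
  rw [sum_sub_distrib, ← sum_inner, sum_sub_average_eq_zero, inner_zero_left, sub_zero]

variable [LinearOrder ι]

theorem sum_sum_eq_two_mul_sum_sum_lt (F : ι → ι → ℝ) (hsymm : ∀ i j, F i j = F j i)
    (hdiag : ∀ i, F i i = 0) :
    ∑ i, ∑ j, F i j = 2 * ∑ i, ∑ j with j < i, F i j := by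
  have hsplit : ∀ i j, F i j = (if j < i then F i j else 0) + (if i < j then F i j else 0) := by
    intro i j
    rcases lt_trichotomy i j with h | rfl | h
    · simp [h, h.not_gt]
    · simp [hdiag]
    · simp [h, h.not_gt]
  have hswap : ∑ i, ∑ j, (if i < j then F i j else 0) = ∑ i, ∑ j, (if j < i then F i j else 0) := by
    rw [sum_comm]
    refine sum_congr rfl fun i _ => sum_congr rfl fun j _ => ?_
    rw [hsymm]
  simp_rw [sum_filter]
  rw [sum_congr rfl fun i _ => sum_congr rfl fun j _ => hsplit i j]
  simp only [sum_add_distrib, hswap]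
  ring

theorem sum_inner_sum_smul_sub (c : ι → ι → ℝ) (hc : ∀ i j, c i j = c j i) (p u : ι → E) :
    ∑ i, ⟪p i, ∑ j, c i j • (u i - u j)⟫ =
      ∑ i, ∑ j with j < i, c i j * ⟪u i - u j, p i - p j⟫ := by
  have hswap : ∑ i, ∑ j, c i j * ⟪p i, u i - u j⟫ = -∑ i, ∑ j, c i j * ⟪p j, u i - u j⟫ := by
    rw [sum_comm, ← sum_neg_distrib]
    refine sum_congr rfl fun i _ => ?_
    rw [← sum_neg_distrib]
    refine sum_congr rfl fun j _ => ?_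
    rw [hc, ← neg_sub (u i), inner_neg_right, mul_neg]
  have hsymm : ∀ i j, c i j * ⟪u i - u j, p i - p j⟫ = c j i * ⟪u j - u i, p j - p i⟫ := by
    intro i j
    rw [hc, ← neg_sub (u i), ← neg_sub (p i), inner_neg_neg]
  rw [← mul_right_inj' (two_ne_zero' ℝ), ← sum_sum_eq_two_mul_sum_sum_lt _ hsymm (by simp)]
  simp only [inner_sum, inner_smul_right]
  calc 2 * ∑ i, ∑ j, c i j * ⟪p i, u i - u j⟫
      = ∑ i, ∑ j, c i j * ⟪p i, u i - u j⟫ - ∑ i, ∑ j, c i j * ⟪p j, u i - u j⟫ := by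
        rw [hswap]; ring
    _ = _ := by
        simp only [← sum_sub_distrib, ← mul_sub, ← inner_sub_left, real_inner_comm]

theorem sum_sum_lt_norm_sub_sq (w : ι → E) :
    ∑ i, ∑ j with j < i, ‖w i - w j‖ ^ 2 =
      Fintype.card ι * ∑ i, ‖w i - (Fintype.card ι : ℝ)⁻¹ • ∑ j, w j‖ ^ 2 := by
  set m := (Fintype.card ι : ℝ)⁻¹ • ∑ j, w j
  have hcentre : ∀ i, ∑ j, (1 : ℝ) • (w i - w j) = (Fintype.card ι : ℝ) • (w i - m) := by
    intro i
    have : (Fintype.card ι : ℝ) ≠ 0 := Nat.cast_ne_zero.mpr (Fintype.card_pos_iff.mpr ⟨i⟩).ne'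
    simp only [one_smul, sum_sub_distrib, sum_const, card_univ, smul_sub, m, smul_smul,
      mul_inv_cancel₀ this, one_smul, Nat.cast_smul_eq_nsmul]
  have h := sum_inner_sum_smul_sub (fun _ _ => 1) (fun _ _ => rfl) (fun i => w i - m) w
  simp only [hcentre, sub_sub_sub_cancel_right, real_inner_self_eq_norm_sq, one_mul,
    inner_smul_right] at h
  rw [← h, mul_sum]

theorem sum_inner_flocking_field (x v : ι → E) (m : E) (a g₀ g₁ : ι → ι → ℝ) (Λ : ℝ)
    (ha : ∀ i j, a i j = a j i) (hg : ∀ i j, g₀ i j - g₁ i j = g₀ j i - g₁ j i) :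
    ∑ i, ⟪v i - m, ∑ j, a i j • (v j - v i) + Λ • ∑ j with j ≠ i, g₀ i j • (x i - x j) +
        Λ • ∑ j with j ≠ i, g₁ i j • (x j - x i)⟫ =
      -∑ i, ∑ j with j < i, a i j * ‖v i - v j‖ ^ 2 +
        Λ * ∑ i, ∑ j with j < i, (g₀ i j - g₁ i j) * ⟪x i - x j, v i - v j⟫ := by
  have hfield : ∀ i, ∑ j, a i j • (v j - v i) + Λ • ∑ j with j ≠ i, g₀ i j • (x i - x j) +
      Λ • ∑ j with j ≠ i, g₁ i j • (x j - x i) =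
        -∑ j, a i j • (v i - v j) + Λ • ∑ j, (g₀ i j - g₁ i j) • (x i - x j) := by
    intro i
    have hoff : ∀ g : ι → ι → ℝ, ∀ y : ι → E,
        ∑ j with j ≠ i, g i j • (y i - y j) = ∑ j, g i j • (y i - y j) :=
      fun g y => sum_filter_of_ne fun j _ h hji => h (by rw [hji, sub_self, smul_zero])
    simp only [← neg_sub (x i), smul_neg, sum_neg_distrib, hoff, ← neg_sub (v i)]
    simp only [sub_smul, sum_sub_distrib, smul_sub]
    abel
  simp only [hfield, inner_add_right, inner_neg_right, inner_smul_right, sum_add_distrib,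
    sum_neg_distrib, ← mul_sum, sum_inner_sum_smul_sub a ha, sum_inner_sum_smul_sub _ hg,
    sub_sub_sub_cancel_right, real_inner_self_eq_norm_sq]

end Pairwise

theorem stmt_5_general
    {n k : ℕ}
    (K σ β : ℝ)
    (hK : 0 < K) (hσ : 0 < σ) (hβ0 : 0 < β)
    (x v : Fin k → ℝ → EuclideanSpace ℝ (Fin n))
    (f0 f1 : ℝ → ℝ)
    (a : Fin k → Fin k → ℝ → ℝ)
    (ha : ∀ i j t, a i j t = K / (σ ^ 2 + ‖x i t - x j t‖ ^ 2) ^ β)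
    (Λ : ℝ → ℝ)
    (hΛ : ∀ t, Λ t = Real.sqrt ((1 / (k : ℝ)) *
      ∑ i : Fin k, ∑ j ∈ Finset.univ.filter (fun j => j < i), ‖v i t - v j t‖ ^ 2))
    (hv : ∀ i, ∀ t : ℝ, 0 ≤ t → HasDerivAt (v i)
      ((∑ j : Fin k, a i j t • (v j t - v i t)) +
        Λ t • (∑ j ∈ Finset.univ.filter (fun j => j ≠ i),
          f0 (‖x i t - x j t‖ ^ 2) • (x i t - x j t)) +
        Λ t • (∑ j ∈ Finset.univ.filter (fun j => j ≠ i),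
          f1 (‖x i t - x j t‖ ^ 2) • (x j t - x i t))) t)
    (vbar : ℝ → EuclideanSpace ℝ (Fin n))
    (hvbar : ∀ t, vbar t = (k : ℝ)⁻¹ • ∑ i : Fin k, v i t)
    (V : ℝ → ℝ)
    (hV : ∀ t, V t = Real.sqrt (∑ i : Fin k, ‖v i t - vbar t‖ ^ 2))
    (xbar : ℝ → EuclideanSpace ℝ (Fin n))
    (X : ℝ → ℝ)
    (hX : ∀ t, X t = Real.sqrt (∑ i : Fin k, ‖x i t - xbar t‖ ^ 2))
    (B : ℝ → ℝ)
    (hB : ∀ t, B t = ∑ i : Fin k, ∑ j ∈ Finset.univ.filter (fun j => j < i),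
      (f0 (‖x i t - x j t‖ ^ 2) - f1 (‖x i t - x j t‖ ^ 2)) *
        ⟪x i t - x j t, v i t - v j t⟫)
    :
    ∀ t : ℝ, 0 ≤ t → 0 < V t →
      ∃ D : ℝ, HasDerivAt V D t ∧
        -(K / σ ^ (2 * β)) * (k : ℝ) * V t + B t ≤ D ∧
        D ≤ -(K * (k : ℝ) / (σ ^ 2 + 2 * X t ^ 2) ^ β) * V t + B t := by
  intro t ht hVpos
  have hk : (k : ℝ) ≠ 0 := by
    rintro hk0
    obtain rfl : k = 0 := by exact_mod_cast hk0
    simp [hV] at hVpos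
  have hW := HasDerivAt.sum_norm_sub_average_sq fun i => hv i t ht
  simp only [Fintype.card_fin, ← hvbar] at hW
  rw [sum_inner_flocking_field (fun i => x i t) (fun i => v i t) (vbar t)
      (fun i j => a i j t) (fun i j => f0 (‖x i t - x j t‖ ^ 2))
      (fun i j => f1 (‖x i t - x j t‖ ^ 2)) (Λ t)
      (fun i j => by simp only [ha, norm_sub_rev]) (fun i j => by simp only [norm_sub_rev]),
    ← hB] at hW
  have hD := hW.sqrt (Real.sqrt_pos.mp (hV t ▸ hVpos)).ne'
  rw [← funext hV, ← hV] at hD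
  have hpairs : ∑ i : Fin k, ∑ j with j < i, ‖v i t - v j t‖ ^ 2 = k * V t ^ 2 := by
    rw [sum_sum_lt_norm_sub_sq, Fintype.card_fin, hV, Real.sq_sqrt (by positivity), hvbar]
  have hΛV : Λ t = V t := by
    rw [hΛ, hpairs, ← mul_assoc, one_div, inv_mul_cancel₀ hk, one_mul,
      Real.sqrt_sq hVpos.le]
  set Q := ∑ i : Fin k, ∑ j with j < i, a i j t * ‖v i t - v j t‖ ^ 2
  have hQ_le : Q ≤ K / σ ^ (2 * β) * (k * V t ^ 2) := by
    simp_rw [← hpairs, Q, mul_sum]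
    gcongr with i _ j _
    rw [ha]
    exact div_rpow_sq_add_le_div_rpow hK.le hσ hβ0.le (by positivity)
  have hQ_ge : K / (σ ^ 2 + 2 * X t ^ 2) ^ β * (k * V t ^ 2) ≤ Q := by
    simp_rw [← hpairs, Q, mul_sum]
    gcongr with i _ j _
    rw [ha, hX, Real.sq_sqrt (by positivity)]
    exact div_rpow_add_le_div_rpow_add hK.le (by positivity) hβ0.le (by positivity)
      (norm_sub_sq_le_two_mul_sum_norm_sub_sq (fun l => x l t) (xbar t) i j)
  refine ⟨_, hD, ?_, ?_⟩
  · rw [hΛV, mul_div_mul_left _ _ two_ne_zero, le_div_iff₀ hVpos]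
    linarith
  · rw [hΛV, mul_div_mul_left _ _ two_ne_zero, div_le_iff₀ hVpos, mul_div_right_comm]
    linarith

theorem stmt_5
    {n k : ℕ} (hn : 1 ≤ n) (hk : 2 ≤ k)
    (K σ β d0 d1 : ℝ) (θ : ℕ)
    (hK : 0 < K) (hσ : 0 < σ) (hβ0 : 0 < β) (hβ : β ≤ 1 / 2)
    (hd0 : 0 < d0) (hd01 : d0 < d1) (hθ2 : 2 ≤ θ) (hθeven : Even θ)
    (x v : Fin k → ℝ → EuclideanSpace ℝ (Fin n))
    (f0 f1 : ℝ → ℝ)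
    (hf0 : ∀ r, f0 r = ((r - d0) ^ θ)⁻¹)
    (hf1 : ∀ r, f1 r = ((r - d1) ^ θ)⁻¹)
    (a : Fin k → Fin k → ℝ → ℝ)
    (ha : ∀ i j t, a i j t = K / (σ ^ 2 + ‖x i t - x j t‖ ^ 2) ^ β)
    (Λ : ℝ → ℝ)
    (hΛ : ∀ t, Λ t = Real.sqrt ((1 / (k : ℝ)) *
      ∑ i : Fin k, ∑ j ∈ Finset.univ.filter (fun j => j < i), ‖v i t - v j t‖ ^ 2))
    (hx : ∀ i, ∀ t : ℝ, 0 ≤ t → HasDerivAt (x i) (v i t) t)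
    (hv : ∀ i, ∀ t : ℝ, 0 ≤ t → HasDerivAt (v i)
      ((∑ j : Fin k, a i j t • (v j t - v i t)) +
        Λ t • (∑ j ∈ Finset.univ.filter (fun j => j ≠ i),
          f0 (‖x i t - x j t‖ ^ 2) • (x i t - x j t)) +
        Λ t • (∑ j ∈ Finset.univ.filter (fun j => j ≠ i),
          f1 (‖x i t - x j t‖ ^ 2) • (x j t - x i t))) t)
    (hinit : ∀ i j : Fin k, i ≠ j →
      d0 < ‖x i 0 - x j 0‖ ^ 2 ∧ ‖x i 0 - x j 0‖ ^ 2 < d1)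
    (vbar : ℝ → EuclideanSpace ℝ (Fin n))
    (hvbar : ∀ t, vbar t = (k : ℝ)⁻¹ • ∑ i : Fin k, v i t)
    (V : ℝ → ℝ)
    (hV : ∀ t, V t = Real.sqrt (∑ i : Fin k, ‖v i t - vbar t‖ ^ 2))
    (xbar : ℝ → EuclideanSpace ℝ (Fin n))
    (hxbar : ∀ t, xbar t = (k : ℝ)⁻¹ • ∑ i : Fin k, x i t)
    (X : ℝ → ℝ)
    (hX : ∀ t, X t = Real.sqrt (∑ i : Fin k, ‖x i t - xbar t‖ ^ 2))
    (B : ℝ → ℝ)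
    (hB : ∀ t, B t = ∑ i : Fin k, ∑ j ∈ Finset.univ.filter (fun j => j < i),
      (f0 (‖x i t - x j t‖ ^ 2) - f1 (‖x i t - x j t‖ ^ 2)) *
        ⟪x i t - x j t, v i t - v j t⟫)
    :
    ∀ t : ℝ, 0 ≤ t → 0 < V t →
      ∃ D : ℝ, HasDerivAt V D t ∧
        -(K / σ ^ (2 * β)) * (k : ℝ) * V t + B t ≤ D ∧
        D ≤ -(K * (k : ℝ) / (σ ^ 2 + 2 * X t ^ 2) ^ β) * V t + B t :=
  stmt_5_general K σ β hK hσ hβ0 x v f0 f1 a ha Λ hΛ hv vbar hvbar V hV xbar X hX B hB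
end

section
/- Fix δ with 0 < δ < d1 − d0 and define the energy E(t) = V(t) + (1/2)·Σ_{1≤j<i≤k} ∫_{‖x_i(t) − x_j(t)‖²}^{d1 − δ} (f0(r) − f1(r)) dr. Under the flocking dynamics, at any time t ≥ 0 at which V(t) > 0 and d0 < ‖x_i(t) − x_j(t)‖² < d1 for all i ≠ j, the function E is differentiable at t and E'(t) ≤ −(K·k/(σ² + 2·X(t)²)^β)·V(t) ≤ 0. -/
/-!
Write `u_i = v_i - v̄`. Because the weights `a_ij` and the interaction coefficients
`(f0 - f1)(‖x_i - x_j‖²)` are symmetric in `i, j`, symmetrisation gives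
`(V²)' = -Σ_{i,j} a_ij ‖v_i - v_j‖² + Λ P` with
`P = Σ_{i,j} (f0 - f1)(‖x_i - x_j‖²) ⟪x_i - x_j, v_i - v_j⟫`, while by the fundamental theorem
of calculus the potential part of the energy has derivative `-P / 2`. Lagrange's identity
`Σ_{i,j} ‖v_i - v_j‖² = 2k Σ_i ‖u_i‖²` shows `Λ = V`, so the two `P`-terms cancel in
`E' = (V²)' / (2V) - P / 2`, leaving `E' = -Σ a_ij ‖v_i - v_j‖² / (2V)`. Finally
`‖x_i - x_j‖² ≤ 2X²` bounds every `a_ij` below by `K / (σ² + 2X²)^β`, and Lagrange's identity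
once more turns the remaining sum into `2k V²`.
-/

open scoped RealInnerProductSpace

open Finset

section

variable {ι E : Type*} [Fintype ι] [NormedAddCommGroup E] [InnerProductSpace ℝ E]

lemma sum_sum_filter_lt_of_symm [LinearOrder ι] (h : ι → ι → ℝ)
    (hsymm : ∀ i j, h i j = h j i) (hdiag : ∀ i, h i i = 0) :
    ∑ i, ∑ j ∈ univ.filter (fun j => j < i), h i j = (1 / 2) * ∑ i, ∑ j, h i j := by
  have hsplit : ∀ i j,
      h i j = (if j < i then h i j else 0) + (if i < j then h j i else 0) := by
    intro i j
    rcases lt_trichotomy i j with hij | rfl | hij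
    · simp [hij, hij.not_gt, hsymm i j]
    · simp [hdiag]
    · simp [hij, hij.not_gt]
  have hswap : ∑ i, ∑ j, (if i < j then h j i else 0) =
      ∑ i, ∑ j, (if j < i then h i j else 0) := sum_comm
  simp only [sum_filter]
  rw [sum_congr rfl fun i _ => sum_congr rfl fun j _ => hsplit i j]
  simp only [sum_add_distrib]
  rw [hswap]
  ring

lemma sum_sum_mul_inner_sub_of_symm (c : ι → ι → ℝ) (hc : ∀ i j, c i j = c j i) (y z : ι → E) :
    ∑ i, ∑ j, c i j * ⟪y i, z i - z j⟫ =
      (1 / 2) * ∑ i, ∑ j, c i j * ⟪y i - y j, z i - z j⟫ := by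
  have hswap : ∑ i, ∑ j, c i j * ⟪y j, z j - z i⟫ = ∑ i, ∑ j, c i j * ⟪y i, z i - z j⟫ := by
    rw [sum_comm]; simp only [hc]
  have hexpand : ∀ i j, c i j * ⟪y i - y j, z i - z j⟫ =
      c i j * ⟪y i, z i - z j⟫ + c i j * ⟪y j, z j - z i⟫ := by
    intro i j; simp only [inner_sub_left, inner_sub_right]; ring
  simp only [hexpand, sum_add_distrib, hswap]
  ring

lemma sum_sub_mean_eq_zero (y : ι → E) :
    ∑ i, (y i - (Fintype.card ι : ℝ)⁻¹ • ∑ j, y j) = 0 := by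
  rcases isEmpty_or_nonempty ι with hι | hι
  · simp
  · rw [sum_sub_distrib, sum_const, card_univ, ← Nat.cast_smul_eq_nsmul ℝ, smul_smul,
      mul_inv_cancel₀ (by positivity), one_smul, sub_self]

lemma sum_sum_norm_sub_sq_eq (y : ι → E) :
    ∑ i, ∑ j, ‖y i - y j‖ ^ 2 =
      2 * Fintype.card ι * ∑ i, ‖y i - (Fintype.card ι : ℝ)⁻¹ • ∑ j, y j‖ ^ 2 := by
  set u := fun i => y i - (Fintype.card ι : ℝ)⁻¹ • ∑ j, y j
  have hu : ∑ i, u i = 0 := sum_sub_mean_eq_zero y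
  have hy : ∀ i j, y i - y j = u i - u j := fun i j => (sub_sub_sub_cancel_right _ _ _).symm
  have hinner : ∑ i, ∑ j, ⟪u i, u j⟫ = 0 := by
    simp only [← inner_sum, ← sum_inner, hu, inner_zero_left]
  calc ∑ i, ∑ j, ‖y i - y j‖ ^ 2 = ∑ i, ∑ j, ‖u i - u j‖ ^ 2 := by simp only [hy]
    _ = 2 * Fintype.card ι * ∑ i, ‖u i‖ ^ 2 := by
      simp only [norm_sub_sq_real, sum_add_distrib, sum_sub_distrib, ← mul_sum, hinner,
        sum_const, card_univ, nsmul_eq_mul]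
      ring

lemma one_div_card_mul_sum_sum_filter_lt_norm_sub_sq [LinearOrder ι] (y : ι → E) :
    1 / (Fintype.card ι : ℝ) * ∑ i, ∑ j ∈ univ.filter (fun j => j < i), ‖y i - y j‖ ^ 2 =
      ∑ i, ‖y i - (Fintype.card ι : ℝ)⁻¹ • ∑ j, y j‖ ^ 2 := by
  rcases isEmpty_or_nonempty ι with hι | hι
  · simp
  · rw [sum_sum_filter_lt_of_symm _ (fun i j => by rw [norm_sub_rev]) (by simp),
      sum_sum_norm_sub_sq_eq]
    field_simp

lemma norm_sub_sq_le_two_mul_sum (y : ι → E) (c : E) (i j : ι) :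
    ‖y i - y j‖ ^ 2 ≤ 2 * ∑ m, ‖y m - c‖ ^ 2 := by
  classical
  rcases eq_or_ne i j with rfl | hij
  · simpa using (by positivity : (0 : ℝ) ≤ 2 * ∑ m, ‖y m - c‖ ^ 2)
  · have hpair : ‖y i - c‖ ^ 2 + ‖y j - c‖ ^ 2 ≤ ∑ m, ‖y m - c‖ ^ 2 := by
      rw [← sum_pair (f := fun m => ‖y m - c‖ ^ 2) hij]
      exact sum_le_univ_sum_of_nonneg fun _ => by positivity
    have hpar := parallelogram_law_with_norm ℝ (y i - c) (y j - c)
    rw [sub_sub_sub_cancel_right] at hpar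
    nlinarith [mul_self_nonneg ‖y i - c + (y j - c)‖]

lemma two_mul_card_mul_mul_sum_norm_sub_mean_sq_le {κ : ℝ} (a : ι → ι → ℝ)
    (ha : ∀ i j, κ ≤ a i j) (y : ι → E) :
    2 * Fintype.card ι * κ * ∑ i, ‖y i - (Fintype.card ι : ℝ)⁻¹ • ∑ j, y j‖ ^ 2 ≤
      ∑ i, ∑ j, a i j * ‖y i - y j‖ ^ 2 :=
  calc _ = κ * ∑ i, ∑ j, ‖y i - y j‖ ^ 2 := by rw [sum_sum_norm_sub_sq_eq]; ring
    _ ≤ _ := by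
      simp only [mul_sum]
      gcongr with i _ j _
      exact ha i j

lemma div_rpow_le_div_rpow_norm_sub_sq {K σ β : ℝ} (hK : 0 ≤ K) (hσ : σ ≠ 0) (hβ : 0 ≤ β)
    (y : ι → E) (c : E) (i j : ι) :
    K / (σ ^ 2 + 2 * ∑ m, ‖y m - c‖ ^ 2) ^ β ≤ K / (σ ^ 2 + ‖y i - y j‖ ^ 2) ^ β := by
  gcongr
  exact norm_sub_sq_le_two_mul_sum y c i j

lemma HasDerivAt.sum_norm_sub_mean_sq {v : ι → ℝ → E} {w : ι → E} {t : ℝ}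
    (hv : ∀ i, HasDerivAt (v i) (w i) t) :
    HasDerivAt (fun s => ∑ i, ‖v i s - (Fintype.card ι : ℝ)⁻¹ • ∑ j, v j s‖ ^ 2)
      (2 * ∑ i, ⟪v i t - (Fintype.card ι : ℝ)⁻¹ • ∑ j, v j t, w i⟫) t := by
  have hmean : HasDerivAt (fun s => (Fintype.card ι : ℝ)⁻¹ • ∑ j, v j s)
      ((Fintype.card ι : ℝ)⁻¹ • ∑ j, w j) t :=
    (HasDerivAt.fun_sum fun j _ => hv j).const_smul _
  refine (HasDerivAt.fun_sum fun i _ => ((hv i).fun_sub hmean).norm_sq).congr_deriv ?_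
  simp only [inner_sub_right, sum_sub_distrib, mul_sub, ← mul_sum]
  rw [← sum_inner, sum_sub_mean_eq_zero, inner_zero_left, mul_zero, sub_zero]

lemma HasDerivAt.integral_left_of_continuousOn {F : ℝ → ℝ} {s : Set ℝ} (hs : IsOpen s)
    (hs' : s.OrdConnected) (hF : ContinuousOn F s) {g : ℝ → ℝ} {g' t b : ℝ}
    (hg : HasDerivAt g g' t) (hgt : g t ∈ s) (hb : b ∈ s) :
    HasDerivAt (fun τ => ∫ r in g τ..b, F r) (-F (g t) * g') t :=
  (intervalIntegral.integral_hasDerivAt_left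
    ((hF.mono (hs'.uIcc_subset hgt hb)).intervalIntegrable)
    (hF.stronglyMeasurableAtFilter hs _ hgt) (hF.continuousAt (hs.mem_nhds hgt))).comp t hg

lemma hasDerivAt_sum_sum_filter_lt_integral [LinearOrder ι] {x : ι → ℝ → E} {v : ι → E}
    {t : ℝ} (hx : ∀ i, HasDerivAt (x i) (v i) t) {F : ℝ → ℝ} {s : Set ℝ} (hs : IsOpen s)
    (hs' : s.OrdConnected) (hF : ContinuousOn F s) {b : ℝ} (hb : b ∈ s)
    (hsep : ∀ i j, i ≠ j → ‖x i t - x j t‖ ^ 2 ∈ s) :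
    HasDerivAt
      (fun τ => ∑ i, ∑ j ∈ univ.filter (fun j => j < i), ∫ r in ‖x i τ - x j τ‖ ^ 2..b, F r)
      (-∑ i, ∑ j, F (‖x i t - x j t‖ ^ 2) * ⟪x i t - x j t, v i - v j⟫) t := by
  have hpair := HasDerivAt.fun_sum fun i (_ : i ∈ univ) => HasDerivAt.fun_sum
    fun j (hj : j ∈ univ.filter (fun j => j < i)) =>
      (((hx i).fun_sub (hx j)).norm_sq).integral_left_of_continuousOn hs hs' hF
        (hsep i j (mem_filter.mp hj).2.ne') hb
  refine hpair.congr_deriv ?_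
  rw [sum_sum_filter_lt_of_symm (fun i j => -F (‖x i t - x j t‖ ^ 2) *
      (2 * ⟪x i t - x j t, v i - v j⟫))]
  · simp only [neg_mul, sum_neg_distrib, mul_left_comm _ (2 : ℝ), ← mul_sum]
    ring
  · intro i j
    rw [norm_sub_rev, ← neg_sub (x i t), ← neg_sub (v i), inner_neg_neg]
  · simp

lemma continuousOn_inv_pow_sub_sub_inv_pow_sub (θ : ℕ) (d0 d1 : ℝ) :
    ContinuousOn (fun r => ((r - d0) ^ θ)⁻¹ - ((r - d1) ^ θ)⁻¹) (Set.Ioo d0 d1) := by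
  refine ContinuousOn.sub ?_ ?_ <;> refine ContinuousOn.inv₀ (by fun_prop) fun r hr => ?_
  · exact pow_ne_zero _ (sub_ne_zero.mpr hr.1.ne')
  · exact pow_ne_zero _ (sub_ne_zero.mpr hr.2.ne)

lemma sum_filter_ne_smul_sub_add_sum_filter_ne_smul_sub_rev [DecidableEq ι] (f g : ℝ → ℝ)
    (x : ι → E) (i : ι) :
    ∑ j ∈ univ.filter (fun j => j ≠ i), f (‖x i - x j‖ ^ 2) • (x i - x j) +
        ∑ j ∈ univ.filter (fun j => j ≠ i), g (‖x i - x j‖ ^ 2) • (x j - x i) =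
      ∑ j, (f (‖x i - x j‖ ^ 2) - g (‖x i - x j‖ ^ 2)) • (x i - x j) := by
  rw [sum_filter_of_ne, sum_filter_of_ne, ← sum_add_distrib]
  · refine sum_congr rfl fun j _ => ?_
    rw [← neg_sub (x i), smul_neg, ← sub_eq_add_neg, sub_smul]
  all_goals
    rintro j - hj rfl
    simp at hj

lemma sum_inner_sub_mean_alignment_add_interaction (a F : ι → ι → ℝ)
    (ha : ∀ i j, a i j = a j i) (hF : ∀ i j, F i j = F j i) (Λ : ℝ) (x v : ι → E) :
    ∑ i, ⟪v i - (Fintype.card ι : ℝ)⁻¹ • ∑ j, v j,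
        ∑ j, a i j • (v j - v i) + Λ • ∑ j, F i j • (x i - x j)⟫ =
      -(1 / 2) * ∑ i, ∑ j, a i j * ‖v i - v j‖ ^ 2 +
        Λ / 2 * ∑ i, ∑ j, F i j * ⟪x i - x j, v i - v j⟫ := by
  set m := (Fintype.card ι : ℝ)⁻¹ • ∑ j, v j
  have halign := sum_sum_mul_inner_sub_of_symm a ha (fun i => v i - m) v
  have hinteract := sum_sum_mul_inner_sub_of_symm F hF (fun i => v i - m) x
  simp only [sub_sub_sub_cancel_right, real_inner_self_eq_norm_sq] at halign hinteract
  have hflip : ∀ i j, ⟪v i - m, v j - v i⟫ = -⟪v i - m, v i - v j⟫ := fun i j => by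
    rw [← inner_neg_right, neg_sub]
  simp only [inner_add_right, inner_sum, real_inner_smul_right, sum_add_distrib, ← mul_sum,
    hflip, mul_neg, sum_neg_distrib, halign, hinteract]
  simp only [real_inner_comm (v _ - v _)]
  ring

lemma HasDerivAt.sqrt_sum_norm_sub_mean_sq_of_alignment_interaction {v : ι → ℝ → E}
    {x : ι → E} {a F : ι → ι → ℝ} (ha : ∀ i j, a i j = a j i) (hF : ∀ i j, F i j = F j i)
    {Λ t : ℝ} (hv : ∀ i, HasDerivAt (v i)
      (∑ j, a i j • (v j t - v i t) + Λ • ∑ j, F i j • (x i - x j)) t)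
    (hpos : ∑ i, ‖v i t - (Fintype.card ι : ℝ)⁻¹ • ∑ j, v j t‖ ^ 2 ≠ 0) :
    HasDerivAt (fun s => √(∑ i, ‖v i s - (Fintype.card ι : ℝ)⁻¹ • ∑ j, v j s‖ ^ 2))
      ((-∑ i, ∑ j, a i j * ‖v i t - v j t‖ ^ 2 +
          Λ * ∑ i, ∑ j, F i j * ⟪x i - x j, v i t - v j t⟫) /
        (2 * √(∑ i, ‖v i t - (Fintype.card ι : ℝ)⁻¹ • ∑ j, v j t‖ ^ 2))) t :=
  ((HasDerivAt.sum_norm_sub_mean_sq hv).sqrt hpos).congr_deriv <| by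
    rw [sum_inner_sub_mean_alignment_add_interaction a F ha hF Λ x (fun i => v i t)]
    ring

end

theorem stmt_6_general
    {n k : ℕ}
    (K σ β d0 d1 : ℝ) (θ : ℕ)
    (hK : 0 < K) (hσ : 0 < σ) (hβ0 : 0 < β)
    (x v : Fin k → ℝ → EuclideanSpace ℝ (Fin n))
    (f0 f1 : ℝ → ℝ)
    (hf0 : ∀ r, f0 r = ((r - d0) ^ θ)⁻¹)
    (hf1 : ∀ r, f1 r = ((r - d1) ^ θ)⁻¹)
    (a : Fin k → Fin k → ℝ → ℝ)
    (ha : ∀ i j t, a i j t = K / (σ ^ 2 + ‖x i t - x j t‖ ^ 2) ^ β)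
    (Λ : ℝ → ℝ)
    (hΛ : ∀ t, Λ t = Real.sqrt ((1 / (k : ℝ)) *
      ∑ i : Fin k, ∑ j ∈ Finset.univ.filter (fun j => j < i), ‖v i t - v j t‖ ^ 2))
    (hx : ∀ i, ∀ t : ℝ, 0 ≤ t → HasDerivAt (x i) (v i t) t)
    (hv : ∀ i, ∀ t : ℝ, 0 ≤ t → HasDerivAt (v i)
      ((∑ j : Fin k, a i j t • (v j t - v i t)) +
        Λ t • (∑ j ∈ Finset.univ.filter (fun j => j ≠ i),
          f0 (‖x i t - x j t‖ ^ 2) • (x i t - x j t)) +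
        Λ t • (∑ j ∈ Finset.univ.filter (fun j => j ≠ i),
          f1 (‖x i t - x j t‖ ^ 2) • (x j t - x i t))) t)
    (vbar : ℝ → EuclideanSpace ℝ (Fin n))
    (hvbar : ∀ t, vbar t = (k : ℝ)⁻¹ • ∑ i : Fin k, v i t)
    (V : ℝ → ℝ)
    (hV : ∀ t, V t = Real.sqrt (∑ i : Fin k, ‖v i t - vbar t‖ ^ 2))
    (xbar : ℝ → EuclideanSpace ℝ (Fin n))
    (X : ℝ → ℝ)
    (hX : ∀ t, X t = Real.sqrt (∑ i : Fin k, ‖x i t - xbar t‖ ^ 2))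
    (δ : ℝ) (hδ : 0 < δ) (hδ' : δ < d1 - d0)
    (En : ℝ → ℝ)
    (hEn : ∀ t, En t = V t + (1 / 2) *
      ∑ i : Fin k, ∑ j ∈ Finset.univ.filter (fun j => j < i),
        ∫ r in (‖x i t - x j t‖ ^ 2)..(d1 - δ), (f0 r - f1 r))
    :
    ∀ t : ℝ, 0 ≤ t → 0 < V t →
      (∀ i j : Fin k, i ≠ j →
        d0 < ‖x i t - x j t‖ ^ 2 ∧ ‖x i t - x j t‖ ^ 2 < d1) →
      ∃ D : ℝ, HasDerivAt En D t ∧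
        D ≤ -(K * (k : ℝ) / (σ ^ 2 + 2 * X t ^ 2) ^ β) * V t ∧
        -(K * (k : ℝ) / (σ ^ 2 + 2 * X t ^ 2) ^ β) * V t ≤ 0 := by
  intro t ht hVpos hsep
  have hvbar' : ∀ s, vbar s = (Fintype.card (Fin k) : ℝ)⁻¹ • ∑ i, v i s := by
    simpa only [Fintype.card_fin] using hvbar
  set A := ∑ i, ∑ j, a i j t * ‖v i t - v j t‖ ^ 2
  set P := ∑ i, ∑ j, (f0 (‖x i t - x j t‖ ^ 2) - f1 (‖x i t - x j t‖ ^ 2)) *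
    ⟪x i t - x j t, v i t - v j t⟫
  have hΛV : Λ t = V t := by
    rw [hΛ, hV, hvbar', ← one_div_card_mul_sum_sum_filter_lt_norm_sub_sq, Fintype.card_fin]
  have hV' : HasDerivAt V ((-A + Λ t * P) / (2 * V t)) t := by
    have hv' : ∀ i, HasDerivAt (v i) (∑ j, a i j t • (v j t - v i t) + Λ t • ∑ j,
        (f0 (‖x i t - x j t‖ ^ 2) - f1 (‖x i t - x j t‖ ^ 2)) • (x i t - x j t)) t :=
      fun i => (hv i t ht).congr_deriv <| by
        rw [add_assoc, ← smul_add,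
          sum_filter_ne_smul_sub_add_sum_filter_ne_smul_sub_rev f0 f1 (fun m => x m t)]
    have hsqrt := HasDerivAt.sqrt_sum_norm_sub_mean_sq_of_alignment_interaction
      (fun i j => by rw [ha, ha, norm_sub_rev]) (fun i j => by rw [norm_sub_rev]) hv'
      (by rw [← hvbar']; exact (Real.sqrt_pos.mp (hV t ▸ hVpos)).ne')
    simpa only [← hvbar', ← funext hV, ← hV t] using hsqrt
  have hU := hasDerivAt_sum_sum_filter_lt_integral (fun i => hx i t ht) isOpen_Ioo
    Set.ordConnected_Ioo (F := fun r => f0 r - f1 r)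
    ((continuousOn_inv_pow_sub_sub_inv_pow_sub θ d0 d1).congr fun r _ => by simp only [hf0, hf1])
    (b := d1 - δ) ⟨by linarith, by linarith⟩ hsep
  have hκ : ∀ i j, K / (σ ^ 2 + 2 * X t ^ 2) ^ β ≤ a i j t := fun i j => by
    rw [ha, hX, Real.sq_sqrt (by positivity)]
    exact div_rpow_le_div_rpow_norm_sub_sq hK.le hσ.ne' hβ0.le (fun m => x m t) (xbar t) i j
  have hA := two_mul_card_mul_mul_sum_norm_sub_mean_sq_le (fun i j => a i j t) hκ (fun i => v i t)
  have hVsq : V t ^ 2 = ∑ i, ‖v i t - vbar t‖ ^ 2 := by rw [hV, Real.sq_sqrt (by positivity)]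
  rw [← hvbar', Fintype.card_fin, ← hVsq] at hA
  refine ⟨-A / (2 * V t), ?_, ?_, ?_⟩
  · rw [show En = fun s => V s + (1 / 2) * _ from funext hEn]
    refine (hV'.add (hU.const_mul (1 / 2))).congr_deriv ?_
    rw [hΛV]
    field_simp
    ring
  · rw [neg_div, neg_mul, neg_le_neg_iff, le_div_iff₀ (by positivity)]
    exact (le_of_eq (by ring)).trans hA
  · rw [neg_mul, neg_nonpos]
    exact mul_nonneg (by positivity) hVpos.le

theorem stmt_6
    {n k : ℕ} (hn : 1 ≤ n) (hk : 2 ≤ k)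
    (K σ β d0 d1 : ℝ) (θ : ℕ)
    (hK : 0 < K) (hσ : 0 < σ) (hβ0 : 0 < β) (hβ : β ≤ 1 / 2)
    (hd0 : 0 < d0) (hd01 : d0 < d1) (hθ2 : 2 ≤ θ) (hθeven : Even θ)
    (x v : Fin k → ℝ → EuclideanSpace ℝ (Fin n))
    (f0 f1 : ℝ → ℝ)
    (hf0 : ∀ r, f0 r = ((r - d0) ^ θ)⁻¹)
    (hf1 : ∀ r, f1 r = ((r - d1) ^ θ)⁻¹)
    (a : Fin k → Fin k → ℝ → ℝ)
    (ha : ∀ i j t, a i j t = K / (σ ^ 2 + ‖x i t - x j t‖ ^ 2) ^ β)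
    (Λ : ℝ → ℝ)
    (hΛ : ∀ t, Λ t = Real.sqrt ((1 / (k : ℝ)) *
      ∑ i : Fin k, ∑ j ∈ Finset.univ.filter (fun j => j < i), ‖v i t - v j t‖ ^ 2))
    (hx : ∀ i, ∀ t : ℝ, 0 ≤ t → HasDerivAt (x i) (v i t) t)
    (hv : ∀ i, ∀ t : ℝ, 0 ≤ t → HasDerivAt (v i)
      ((∑ j : Fin k, a i j t • (v j t - v i t)) +
        Λ t • (∑ j ∈ Finset.univ.filter (fun j => j ≠ i),
          f0 (‖x i t - x j t‖ ^ 2) • (x i t - x j t)) +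
        Λ t • (∑ j ∈ Finset.univ.filter (fun j => j ≠ i),
          f1 (‖x i t - x j t‖ ^ 2) • (x j t - x i t))) t)
    (hinit : ∀ i j : Fin k, i ≠ j →
      d0 < ‖x i 0 - x j 0‖ ^ 2 ∧ ‖x i 0 - x j 0‖ ^ 2 < d1)
    (vbar : ℝ → EuclideanSpace ℝ (Fin n))
    (hvbar : ∀ t, vbar t = (k : ℝ)⁻¹ • ∑ i : Fin k, v i t)
    (V : ℝ → ℝ)
    (hV : ∀ t, V t = Real.sqrt (∑ i : Fin k, ‖v i t - vbar t‖ ^ 2))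
    (xbar : ℝ → EuclideanSpace ℝ (Fin n))
    (hxbar : ∀ t, xbar t = (k : ℝ)⁻¹ • ∑ i : Fin k, x i t)
    (X : ℝ → ℝ)
    (hX : ∀ t, X t = Real.sqrt (∑ i : Fin k, ‖x i t - xbar t‖ ^ 2))
    (δ : ℝ) (hδ : 0 < δ) (hδ' : δ < d1 - d0)
    (En : ℝ → ℝ)
    (hEn : ∀ t, En t = V t + (1 / 2) *
      ∑ i : Fin k, ∑ j ∈ Finset.univ.filter (fun j => j < i),
        ∫ r in (‖x i t - x j t‖ ^ 2)..(d1 - δ), (f0 r - f1 r))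
    :
    ∀ t : ℝ, 0 ≤ t → 0 < V t →
      (∀ i j : Fin k, i ≠ j →
        d0 < ‖x i t - x j t‖ ^ 2 ∧ ‖x i t - x j t‖ ^ 2 < d1) →
      ∃ D : ℝ, HasDerivAt En D t ∧
        D ≤ -(K * (k : ℝ) / (σ ^ 2 + 2 * X t ^ 2) ^ β) * V t ∧
        -(K * (k : ℝ) / (σ ^ 2 + 2 * X t ^ 2) ^ β) * V t ≤ 0 :=
  stmt_6_general K σ β d0 d1 θ hK hσ hβ0 x v f0 f1 hf0 hf1 a ha Λ hΛ hx hv vbar hvbar V hV xbar X hX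
    δ hδ hδ' En hEn
end

section
/- Collision avoidance and cohesion: under the flocking dynamics with initial condition d0 < ‖x_i(0) − x_j(0)‖² < d1 for all i ≠ j, one has d0 < ‖x_i(t) − x_j(t)‖² < d1 for all t ≥ 0 and all i ≠ j; in particular no two agents ever collide and the squared inter-agent distances remain bounded by d1. -/
/-!
Along the flow, consider the energy `Λ + ½ ∑_{j<i} U(‖xᵢ - xⱼ‖²)`, where `U` is the barrier
potential with `U' = f1 - f0` on `(d0, d1)`, blowing up at both ends. While all squared distances
stay in `(d0, d1)` this energy is nonincreasing: the alignment term only dissipates, and the two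
interaction terms contribute to `d(Λ²)/dt` exactly `-2Λ` times the derivative of the potential
part. Hence every `U(‖xᵢ - xⱼ‖²)` stays below twice the initial energy, which keeps the squared
distances a fixed `δ > 0` inside `(d0, d1)`, and a first-exit-time argument shows that they never
leave it.
-/

open Finset Set
open scoped RealInnerProductSpace

section PairSums

variable {ι : Type*} [Fintype ι] [LinearOrder ι]

theorem sum_sum_eq_sum_sum_lt {M : Type*} [AddCommMonoid M] (F : ι → ι → M)
    (hF : ∀ i, F i i = 0) :
    ∑ i, ∑ j, F i j = ∑ i, ∑ j ∈ univ.filter (· < i), (F i j + F j i) := by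
  calc ∑ i, ∑ j, F i j
      = ∑ i, ∑ j, (if j < i then F i j else 0) + ∑ i, ∑ j, (if i < j then F i j else 0) := by
        rw [← sum_add_distrib]
        refine sum_congr rfl fun i _ => ?_
        rw [← sum_add_distrib]
        refine sum_congr rfl fun j _ => ?_
        rcases lt_trichotomy j i with h | rfl | h
        · simp [h, h.not_gt]
        · simp [hF]
        · simp [h, h.not_gt]
    _ = _ := by
        rw [sum_comm (f := fun i j => if i < j then F i j else 0), ← sum_add_distrib]
        simp only [← sum_add_distrib, sum_filter]
        exact sum_congr rfl fun i _ => sum_congr rfl fun j _ => by split_ifs <;> simp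

theorem sum_sum_eq_zero_of_antisymm {M : Type*} [AddCommGroup M] [IsAddTorsionFree M]
    (φ : ι → ι → M) (hφ : ∀ i j, φ j i = -φ i j) : ∑ i, ∑ j, φ i j = 0 := by
  rw [sum_sum_eq_sum_sum_lt φ fun i => self_eq_neg.mp (hφ i i)]
  exact sum_eq_zero fun i _ => sum_eq_zero fun j _ => by rw [hφ i j, add_neg_cancel]

variable {E : Type*} [NormedAddCommGroup E] [InnerProductSpace ℝ E]

theorem sum_inner_sum_of_antisymm (V : ι → E) (φ : ι → ι → E) (hφ : ∀ i j, φ j i = -φ i j) :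
    ∑ i, ⟪V i, ∑ j, φ i j⟫ = ∑ i, ∑ j ∈ univ.filter (· < i), ⟪V i - V j, φ i j⟫ := by
  have := IsAddTorsionFree.of_isTorsionFree ℝ E
  simp_rw [inner_sum]
  rw [sum_sum_eq_sum_sum_lt _ fun i => by rw [self_eq_neg.mp (hφ i i), inner_zero_right]]
  exact sum_congr rfl fun i _ => sum_congr rfl fun j _ => by
    rw [hφ i j, inner_neg_right, inner_sub_left, sub_eq_add_neg]

theorem sum_sum_lt_inner_sub_sub (V W : ι → E) :
    ∑ i, ∑ j ∈ univ.filter (· < i), ⟪V i - V j, W i - W j⟫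
      = Fintype.card ι * ∑ i, ⟪V i, W i⟫ - ⟪∑ i, V i, ∑ i, W i⟫ := by
  have hdouble := sum_sum_eq_sum_sum_lt (fun i j => ⟪V i - V j, W i - W j⟫) (by simp)
  have hsymm : ∀ i j, ⟪V j - V i, W j - W i⟫ = ⟪V i - V j, W i - W j⟫ := fun i j => by
    rw [← neg_sub (V i), ← neg_sub (W i), inner_neg_neg]
  simp only [hsymm, ← two_mul, ← mul_sum] at hdouble
  have hexpand : ∑ i, ∑ j, ⟪V i - V j, W i - W j⟫
      = 2 * (Fintype.card ι * ∑ i, ⟪V i, W i⟫ - ⟪∑ i, V i, ∑ i, W i⟫) := by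
    simp only [inner_sub_left, inner_sub_right, sum_sub_distrib, sum_const, card_univ,
      nsmul_eq_mul, ← inner_sum, ← sum_inner, ← mul_sum]
    ring
  linarith

end PairSums

theorem mul_one_sub_div_sqrt_le {l η : ℝ} (hl : 0 ≤ l) (hη : 0 < η) :
    l * (1 - l / √(l ^ 2 + η ^ 2)) ≤ η := by
  set G := √(l ^ 2 + η ^ 2)
  have hG : 0 < G := Real.sqrt_pos.2 (by positivity)
  have hlG : l ≤ G := Real.le_sqrt_of_sq_le (by nlinarith)
  have hGl : G ≤ l + η := (Real.sqrt_le_left (by positivity)).2 (by nlinarith)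
  calc l * (1 - l / G) = l / G * (G - l) := by field_simp
    _ ≤ 1 * (G - l) := mul_le_mul_of_nonneg_right (div_le_one_of_le₀ hlG hG.le) (by linarith)
    _ ≤ η := by linarith

theorem regularized_slope_nonpos {l η s p M : ℝ} (hl : 0 ≤ l) (hη : 0 < η) (hM : 0 ≤ M)
    (hs : s ≤ -2 * l * p) (hp : |p| ≤ M * l) :
    s / (2 * √(l ^ 2 + η ^ 2)) + p - M * η ≤ 0 := by
  set G := √(l ^ 2 + η ^ 2)
  have hG : 0 < G := Real.sqrt_pos.2 (by positivity)
  have hlG : l / G ≤ 1 := div_le_one_of_le₀ (Real.le_sqrt_of_sq_le (by nlinarith)) hG.le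
  have hgap := mul_one_sub_div_sqrt_le hl hη
  calc s / (2 * G) + p - M * η ≤ |p| * (1 - l / G) - M * η := by
        have : s / (2 * G) ≤ -(l / G) * p := by
          rw [div_le_iff₀ (by positivity)]
          have : -(l / G) * p * (2 * G) = -2 * l * p := by field_simp
          linarith
        nlinarith [le_abs_self p]
    _ ≤ M * l * (1 - l / G) - M * η := by gcongr
    _ ≤ 0 := by nlinarith

theorem antitoneOn_sqrt_add {S S' P P' : ℝ → ℝ} {D : Set ℝ} {M : ℝ} (hD : Convex ℝ D)
    (hM : 0 ≤ M) (hS0 : ∀ t ∈ D, 0 ≤ S t) (hS : ∀ t ∈ D, HasDerivAt S (S' t) t)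
    (hP : ∀ t ∈ D, HasDerivAt P (P' t) t) (hS' : ∀ t ∈ D, S' t ≤ -2 * √(S t) * P' t)
    (hP' : ∀ t ∈ D, |P' t| ≤ M * √(S t)) :
    AntitoneOn (fun t => √(S t) + P t) D := by
  -- `√S` need not be differentiable where `S` vanishes, so we regularize it to `√(S + η²)`.
  have hreg : ∀ η > 0, AntitoneOn (fun t => √(S t + η ^ 2) + P t - M * η * t) D := by
    intro η hη
    have hderiv : ∀ t ∈ D, HasDerivAt (fun t => √(S t + η ^ 2) + P t - M * η * t)
        (S' t / (2 * √(S t + η ^ 2)) + P' t - M * η) t := fun t ht => by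
      simpa using ((((hS t ht).add_const (η ^ 2)).sqrt
        (add_pos_of_nonneg_of_pos (hS0 t ht) (by positivity)).ne').fun_add (hP t ht)).fun_sub
        ((hasDerivAt_id t).const_mul (M * η))
    refine antitoneOn_of_hasDerivWithinAt_nonpos hD
      (fun t ht => (hderiv t ht).continuousAt.continuousWithinAt)
      (fun t ht => (hderiv t (interior_subset ht)).hasDerivWithinAt) fun t ht => ?_
    have ht := interior_subset ht
    have := regularized_slope_nonpos (Real.sqrt_nonneg (S t)) hη hM (hS' t ht) (hP' t ht)
    rwa [Real.sq_sqrt (hS0 t ht)] at this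
  intro s hs t ht hst
  refine le_of_forall_pos_le_add fun ε hε => ?_
  set η := ε / (1 + M * (t - s))
  have hη : 0 < η := div_pos hε (by nlinarith)
  have hηε : η + M * η * t = ε + M * η * s := by
    simp only [η]; field_simp; ring
  have hleft : √(S t) ≤ √(S t + η ^ 2) :=
    Real.sqrt_le_sqrt (le_add_of_nonneg_right (by positivity))
  have hright : √(S s + η ^ 2) ≤ √(S s) + η := (Real.sqrt_le_left (by positivity)).2
    (by nlinarith [Real.sq_sqrt (hS0 s hs), Real.sqrt_nonneg (S s)])
  have := hreg η hη hs ht hst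
  simp only at this ⊢
  linarith

theorem ContinuousOn.forall_mem_of_apriori_bound {X : Type*} [TopologicalSpace X] {γ : ℝ → X}
    {a : ℝ} {U F : Set X} (hγ : ContinuousOn γ (Ici a)) (hU : IsOpen U) (hF : IsClosed F)
    (hFU : F ⊆ U) (ha : γ a ∈ U) (htrap : ∀ T, a ≤ T → (∀ s ∈ Icc a T, γ s ∈ U) → γ T ∈ F) :
    ∀ t, a ≤ t → γ t ∈ U := by
  intro t hat
  by_contra hbad
  -- `τ` is the first exit time from `U`; on `[a, τ)` the a priori bound puts `γ` in `F`.
  have hZ : IsCompact (Icc a t ∩ γ ⁻¹' Uᶜ) :=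
    isCompact_Icc.of_isClosed_subset ((hγ.mono Icc_subset_Ici_self).preimage_isClosed_of_isClosed
      isClosed_Icc hU.isClosed_compl) inter_subset_left
  obtain ⟨τ, ⟨⟨haτ, hτt⟩, hτU⟩, hτmin⟩ := hZ.exists_isLeast ⟨t, ⟨hat, le_rfl⟩, hbad⟩
  have hbefore : ∀ s ∈ Ico a τ, γ s ∈ U := fun s hs => by
    by_contra h
    exact (hs.2.trans_le (hτmin ⟨⟨hs.1, hs.2.le.trans hτt⟩, h⟩)).false
  have haτ' : a < τ := haτ.lt_of_ne fun h => hτU (h ▸ ha)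
  have hmaps : MapsTo γ (Ico a τ) F := fun s hs =>
    htrap s hs.1 fun u hu => hbefore u ⟨hu.1, hu.2.trans_lt hs.2⟩
  have hτF : γ τ ∈ closure F := ((hγ τ haτ).mono Ico_subset_Ici_self).mem_closure
    (by rw [closure_Ico haτ'.ne]; exact right_mem_Icc.2 haτ) hmaps
  exact hτU (hFU (hF.closure_eq ▸ hτF))

theorem exists_pos_le_of_mul_inv_pow_le {c : ℝ} (hc : 0 < c) {m : ℕ} (hm : m ≠ 0) (B : ℝ) :
    ∃ δ > 0, ∀ s > 0, c * (s ^ m)⁻¹ ≤ B → δ ≤ s := by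
  refine ⟨min 1 (c / (|B| + 1)), by positivity, fun s hs hB => ?_⟩
  by_contra! hsδ
  have hs1 : s ≤ 1 := (hsδ.trans_le (min_le_left _ _)).le
  have hsc : s < c / (|B| + 1) := hsδ.trans_le (min_le_right _ _)
  have hpow : s ^ m ≤ s := pow_le_of_le_one hs.le hs1 hm
  have : |B| + 1 < c * (s ^ m)⁻¹ := by
    rw [lt_div_iff₀ (by positivity), mul_comm] at hsc
    rw [← div_eq_mul_inv, lt_div_iff₀ (by positivity)]
    nlinarith [abs_nonneg B]
  linarith [le_abs_self B]

noncomputable def barrierPotential (d0 d1 : ℝ) (θ : ℕ) (r : ℝ) : ℝ :=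
  ((θ : ℝ) - 1)⁻¹ * (((r - d0) ^ (θ - 1))⁻¹ + ((d1 - r) ^ (θ - 1))⁻¹)

section BarrierPotential

variable {d0 d1 : ℝ} {θ : ℕ}

theorem barrierPotential_nonneg (hθ : 1 ≤ θ) {r : ℝ} (hr : r ∈ Ioo d0 d1) :
    0 ≤ barrierPotential d0 d1 θ r := by
  have : (0 : ℝ) ≤ θ - 1 := sub_nonneg.2 (by exact_mod_cast hθ)
  have := sub_pos.2 hr.1
  have := sub_pos.2 hr.2
  unfold barrierPotential
  positivity

theorem hasDerivAt_barrierPotential (hθ : 2 ≤ θ) (hθe : Even θ) {r : ℝ} (hr0 : r ≠ d0)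
    (hr1 : r ≠ d1) :
    HasDerivAt (barrierPotential d0 d1 θ) (((r - d1) ^ θ)⁻¹ - ((r - d0) ^ θ)⁻¹) r := by
  obtain ⟨m, rfl⟩ : ∃ m, θ = m + 2 := ⟨θ - 2, by omega⟩
  have h0 : r - d0 ≠ 0 := sub_ne_zero.2 hr0
  have h1 : d1 - r ≠ 0 := sub_ne_zero.2 hr1.symm
  have hd0 := (((hasDerivAt_id r).sub_const d0).fun_pow (m + 1)).fun_inv (pow_ne_zero _ h0)
  have hd1 := (((hasDerivAt_id r).const_sub d1).fun_pow (m + 1)).fun_inv (pow_ne_zero _ h1)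
  have hU : barrierPotential d0 d1 (m + 2)
      = fun y => ((m : ℝ) + 1)⁻¹ * (((y - d0) ^ (m + 1))⁻¹ + ((d1 - y) ^ (m + 1))⁻¹) := by
    funext y
    simp only [barrierPotential]
    push_cast
    ring
  rw [hU]
  refine ((hd0.fun_add hd1).const_mul _).congr_deriv ?_
  rw [show r - d1 = -(d1 - r) by ring, hθe.neg_pow]
  simp only [id, Nat.add_sub_cancel]
  push_cast
  field_simp
  ring

theorem continuousOn_inv_pow_sub_inv_pow :
    ContinuousOn (fun r => ((r - d1) ^ θ)⁻¹ - ((r - d0) ^ θ)⁻¹) (Ioo d0 d1) := by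
  refine (ContinuousOn.inv₀ (by fun_prop) fun r hr => ?_).sub
    (ContinuousOn.inv₀ (by fun_prop) fun r hr => ?_)
  · exact pow_ne_zero _ (sub_ne_zero.2 hr.2.ne)
  · exact pow_ne_zero _ (sub_ne_zero.2 hr.1.ne')

theorem exists_mem_Icc_of_barrierPotential_le (hθ : 2 ≤ θ) (B : ℝ) :
    ∃ δ > 0, ∀ r ∈ Ioo d0 d1, barrierPotential d0 d1 θ r ≤ B → r ∈ Icc (d0 + δ) (d1 - δ) := by
  have hc : 0 < ((θ : ℝ) - 1)⁻¹ := inv_pos.2 (by linarith [show (2 : ℝ) ≤ θ by exact_mod_cast hθ])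
  obtain ⟨δ, hδ, hle⟩ := exists_pos_le_of_mul_inv_pow_le hc (by omega : θ - 1 ≠ 0) B
  refine ⟨δ, hδ, fun r hr hUr => ?_⟩
  have h0 := sub_pos.2 hr.1
  have h1 := sub_pos.2 hr.2
  have hδ0 := hle (r - d0) h0 <| le_trans (mul_le_mul_of_nonneg_left
    (le_add_of_nonneg_right (by positivity)) hc.le) hUr
  have hδ1 := hle (d1 - r) h1 <| le_trans (mul_le_mul_of_nonneg_left
    (le_add_of_nonneg_left (by positivity)) hc.le) hUr
  constructor <;> linarith

end BarrierPotential

section Configurations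

variable {E : Type*} [SeminormedAddCommGroup E] {k : ℕ}

def sqDistsIn (s : Set ℝ) : Set (Fin k → E) := {X | ∀ i j, i ≠ j → ‖X i - X j‖ ^ 2 ∈ s}

theorem IsOpen.sqDistsIn {s : Set ℝ} (hs : IsOpen s) : IsOpen (sqDistsIn s : Set (Fin k → E)) := by
  simp only [_root_.sqDistsIn, ofPred_forall]
  exact isOpen_iInter_of_finite fun i => isOpen_iInter_of_finite fun j =>
    isOpen_iInter_of_finite fun _ => hs.preimage (by fun_prop)

theorem IsClosed.sqDistsIn {s : Set ℝ} (hs : IsClosed s) :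
    IsClosed (sqDistsIn s : Set (Fin k → E)) := by
  simp only [_root_.sqDistsIn, ofPred_forall]
  exact isClosed_iInter fun i => isClosed_iInter fun j =>
    isClosed_iInter fun _ => hs.preimage (by fun_prop)

theorem sqDistsIn_mono {s t : Set ℝ} (h : s ⊆ t) :
    (sqDistsIn s : Set (Fin k → E)) ⊆ sqDistsIn t :=
  fun _ hX i j hij => h (hX i j hij)

-- `Λ = √(velocityDispersion v)` in the flocking dynamics.
noncomputable def velocityDispersion (V : Fin k → E) : ℝ :=
  (1 / (k : ℝ)) * ∑ i, ∑ j ∈ univ.filter (· < i), ‖V i - V j‖ ^ 2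

def pairPotentialSum (U : ℝ → ℝ) (X : Fin k → E) : ℝ :=
  ∑ i, ∑ j ∈ univ.filter (· < i), U (‖X i - X j‖ ^ 2)

variable {X V : Fin k → E}

theorem pairPotential_le_pairPotentialSum {U : ℝ → ℝ} {I : Set ℝ} (hU : ∀ r ∈ I, 0 ≤ U r)
    (hX : X ∈ sqDistsIn I) {i j : Fin k} (hij : i ≠ j) :
    U (‖X i - X j‖ ^ 2) ≤ pairPotentialSum U X := by
  wlog hji : j < i generalizing i j
  · rw [norm_sub_rev]
    exact this hij.symm (hij.lt_or_gt.resolve_right hji)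
  have hnonneg : ∀ i, ∀ j ∈ univ.filter (· < i), 0 ≤ U (‖X i - X j‖ ^ 2) := fun i j hj =>
    hU _ (hX i j (mem_filter.1 hj).2.ne')
  calc U (‖X i - X j‖ ^ 2) ≤ ∑ j ∈ univ.filter (· < i), U (‖X i - X j‖ ^ 2) :=
        single_le_sum (hnonneg i) (by simpa using hji)
    _ ≤ pairPotentialSum U X := single_le_sum (f := fun i => ∑ j ∈ univ.filter (· < i), _)
        (fun i _ => sum_nonneg (hnonneg i)) (mem_univ i)

theorem norm_sub_le_sqrt_velocityDispersion {i j : Fin k} (hji : j < i) :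
    ‖V i - V j‖ ≤ √k * √(velocityDispersion V) := by
  have hk : (k : ℝ) ≠ 0 := Nat.cast_ne_zero.2 (Fin.pos i).ne'
  rw [← Real.sqrt_mul (Nat.cast_nonneg k), velocityDispersion, ← mul_assoc, mul_one_div_cancel hk,
    one_mul, ← Real.sqrt_sq (norm_nonneg _)]
  refine Real.sqrt_le_sqrt ?_
  calc ‖V i - V j‖ ^ 2 ≤ ∑ j ∈ univ.filter (· < i), ‖V i - V j‖ ^ 2 :=
        single_le_sum (f := fun j => ‖V i - V j‖ ^ 2) (fun _ _ => sq_nonneg _) (by simpa using hji)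
    _ ≤ _ := single_le_sum (f := fun i => ∑ j ∈ univ.filter (· < i), ‖V i - V j‖ ^ 2)
        (fun i _ => sum_nonneg fun _ _ => sq_nonneg _) (mem_univ i)

theorem continuousOn_sum_abs_mul_norm {g : ℝ → ℝ} {I D : Set ℝ} {x : Fin k → ℝ → E}
    (hg : ContinuousOn g I) (hx : ∀ i, ContinuousOn (x i) D)
    (hI : ∀ t ∈ D, (fun i => x i t) ∈ sqDistsIn I) :
    ContinuousOn (fun t => ∑ i, ∑ j ∈ univ.filter (· < i),
      |g (‖x i t - x j t‖ ^ 2)| * ‖x i t - x j t‖) D := by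
  refine continuousOn_finsetSum _ fun i _ => continuousOn_finsetSum _ fun j hj => ?_
  have hd : ContinuousOn (fun t => x i t - x j t) D := (hx i).sub (hx j)
  exact ((hg.comp (hd.norm.pow 2) fun t ht => hI t ht i j (mem_filter.1 hj).2.ne').abs).mul
    hd.norm

end Configurations

section Flock

variable {E : Type*} [NormedAddCommGroup E] [InnerProductSpace ℝ E] {k : ℕ}

def flockAccel (a : Fin k → Fin k → ℝ) (f0 f1 : ℝ → ℝ) (Λ : ℝ) (X V : Fin k → E) (i : Fin k) :
    E :=
  (∑ j, a i j • (V j - V i)) +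
    Λ • (∑ j ∈ univ.filter (fun j => j ≠ i), f0 (‖X i - X j‖ ^ 2) • (X i - X j)) +
    Λ • (∑ j ∈ univ.filter (fun j => j ≠ i), f1 (‖X i - X j‖ ^ 2) • (X j - X i))

def flockPairForce (a : Fin k → Fin k → ℝ) (f0 f1 : ℝ → ℝ) (Λ : ℝ) (X V : Fin k → E)
    (i j : Fin k) : E :=
  a i j • (V j - V i) - (Λ * (f1 (‖X i - X j‖ ^ 2) - f0 (‖X i - X j‖ ^ 2))) • (X i - X j)

def interactionPower (g : ℝ → ℝ) (X V : Fin k → E) : ℝ :=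
  ∑ i, ∑ j ∈ univ.filter (· < i), g (‖X i - X j‖ ^ 2) * ⟪X i - X j, V i - V j⟫

variable {a : Fin k → Fin k → ℝ} {f0 f1 : ℝ → ℝ} {Λ : ℝ} {X V : Fin k → E}

theorem flockAccel_eq_sum (i : Fin k) :
    flockAccel a f0 f1 Λ X V i = ∑ j, flockPairForce a f0 f1 Λ X V i j := by
  unfold flockAccel flockPairForce
  rw [sum_filter_of_ne fun j _ h => by rintro rfl; simp at h,
    sum_filter_of_ne fun j _ h => by rintro rfl; simp at h, smul_sum, smul_sum,
    ← sum_add_distrib, ← sum_add_distrib]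
  exact sum_congr rfl fun j _ => by module

theorem flockPairForce_antisymm (ha : ∀ i j, a i j = a j i) (i j : Fin k) :
    flockPairForce a f0 f1 Λ X V j i = -flockPairForce a f0 f1 Λ X V i j := by
  unfold flockPairForce
  rw [ha, norm_sub_rev]
  module

theorem sum_flockAccel (ha : ∀ i j, a i j = a j i) : ∑ i, flockAccel a f0 f1 Λ X V i = 0 := by
  have := IsAddTorsionFree.of_isTorsionFree ℝ E
  simp_rw [flockAccel_eq_sum]
  exact sum_sum_eq_zero_of_antisymm _ (flockPairForce_antisymm ha)

theorem sum_inner_flockAccel_le (ha : ∀ i j, a i j = a j i) (ha0 : ∀ i j, 0 ≤ a i j) :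
    ∑ i, ⟪V i, flockAccel a f0 f1 Λ X V i⟫ ≤ -Λ * interactionPower (fun r => f1 r - f0 r) X V := by
  simp_rw [interactionPower, flockAccel_eq_sum,
    sum_inner_sum_of_antisymm V _ (flockPairForce_antisymm ha), mul_sum]
  refine sum_le_sum fun i _ => sum_le_sum fun j _ => ?_
  have hdiss : 0 ≤ a i j * ‖V i - V j‖ ^ 2 := mul_nonneg (ha0 i j) (sq_nonneg _)
  unfold flockPairForce
  rw [← neg_sub (V i), inner_sub_right, inner_smul_right, inner_smul_right, inner_neg_right,
    real_inner_self_eq_norm_sq, real_inner_comm (X i - X j)]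
  linarith

theorem abs_interactionPower_le (g : ℝ → ℝ) :
    |interactionPower g X V| ≤
      √k * (∑ i, ∑ j ∈ univ.filter (· < i), |g (‖X i - X j‖ ^ 2)| * ‖X i - X j‖) *
        √(velocityDispersion V) := by
  simp_rw [interactionPower, mul_sum, sum_mul]
  refine (abs_sum_le_sum_abs _ _).trans (sum_le_sum fun i _ => ?_)
  refine (abs_sum_le_sum_abs _ _).trans (sum_le_sum fun j hj => ?_)
  have hV := norm_sub_le_sqrt_velocityDispersion (V := V) (mem_filter.1 hj).2
  rw [abs_mul]
  calc |g (‖X i - X j‖ ^ 2)| * |⟪X i - X j, V i - V j⟫|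
      ≤ |g (‖X i - X j‖ ^ 2)| * (‖X i - X j‖ * (√k * √(velocityDispersion V))) := by
        gcongr
        exact (abs_real_inner_le_norm _ _).trans (by gcongr)
    _ = _ := by ring

theorem hasDerivAt_velocityDispersion {v : Fin k → ℝ → E} {w : Fin k → E} {t : ℝ}
    (hv : ∀ i, HasDerivAt (v i) (w i) t) (hw : ∑ i, w i = 0) :
    HasDerivAt (fun t => velocityDispersion fun i => v i t) (2 * ∑ i, ⟪v i t, w i⟫) t := by
  have h : HasDerivAt (fun t => velocityDispersion fun i => v i t)
      ((1 / (k : ℝ)) * ∑ i, ∑ j ∈ univ.filter (· < i), 2 * ⟪v i t - v j t, w i - w j⟫) t :=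
    (HasDerivAt.fun_sum fun i _ => HasDerivAt.fun_sum fun j _ =>
      ((hv i).fun_sub (hv j)).norm_sq).const_mul _
  refine h.congr_deriv ?_
  simp_rw [← mul_sum, sum_sum_lt_inner_sub_sub, hw, inner_zero_right, sub_zero,
    Fintype.card_fin]
  rcases eq_or_ne k 0 with rfl | hk
  · simp
  · field_simp

theorem hasDerivAt_pairPotentialSum {U g : ℝ → ℝ} {I : Set ℝ} {x : Fin k → ℝ → E} {t : ℝ}
    (hU : ∀ r ∈ I, HasDerivAt U (g r) r) (hx : ∀ i, HasDerivAt (x i) (V i) t)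
    (hI : (fun i => x i t) ∈ sqDistsIn I) :
    HasDerivAt (fun t => pairPotentialSum U fun i => x i t)
      (2 * interactionPower g (fun i => x i t) V) t := by
  simp_rw [interactionPower, mul_sum]
  refine HasDerivAt.fun_sum fun i _ => HasDerivAt.fun_sum fun j hj => ?_
  exact ((hU _ (hI i j (mem_filter.1 hj).2.ne')).comp t
    ((hx i).fun_sub (hx j)).norm_sq).congr_deriv (by ring)

theorem flock_energy_le {a : Fin k → Fin k → ℝ → ℝ} {f0 f1 U : ℝ → ℝ} {I : Set ℝ}
    {Λ : ℝ → ℝ} {x v : Fin k → ℝ → E} {T : ℝ} (hT : 0 ≤ T)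
    (hU : ∀ r ∈ I, HasDerivAt U (f1 r - f0 r) r) (hg : ContinuousOn (fun r => f1 r - f0 r) I)
    (ha : ∀ i j t, a i j t = a j i t) (ha0 : ∀ i j t, 0 ≤ a i j t)
    (hΛ : ∀ t, Λ t = √(velocityDispersion fun i => v i t))
    (hx : ∀ i, ∀ t, 0 ≤ t → HasDerivAt (x i) (v i t) t)
    (hv : ∀ i, ∀ t, 0 ≤ t → HasDerivAt (v i)
      (flockAccel (fun i j => a i j t) f0 f1 (Λ t) (fun i => x i t) (fun i => v i t) i) t)
    (hI : ∀ t ∈ Icc 0 T, (fun i => x i t) ∈ sqDistsIn I) :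
    Λ T + pairPotentialSum U (fun i => x i T) / 2 ≤
      Λ 0 + pairPotentialSum U (fun i => x i 0) / 2 := by
  obtain ⟨C, hC⟩ := isCompact_Icc.exists_bound_of_continuousOn (continuousOn_sum_abs_mul_norm hg
    (fun i t ht => (hx i t ht.1).continuousAt.continuousWithinAt) hI)
  have hC0 : 0 ≤ C := (norm_nonneg _).trans (hC 0 ⟨le_rfl, hT⟩)
  have hS0 : ∀ t ∈ Icc 0 T, 0 ≤ velocityDispersion fun i => v i t := fun t _ => by
    unfold velocityDispersion
    positivity
  have hS : ∀ t ∈ Icc 0 T, HasDerivAt (fun t => velocityDispersion fun i => v i t)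
      (2 * ∑ i, ⟪v i t,
        flockAccel (fun i j => a i j t) f0 f1 (Λ t) (fun i => x i t) (fun i => v i t) i⟫) t :=
    fun t ht => hasDerivAt_velocityDispersion (fun i => hv i t ht.1)
      (sum_flockAccel fun i j => ha i j t)
  have hP : ∀ t ∈ Icc 0 T, HasDerivAt (fun t => pairPotentialSum U (fun i => x i t) / 2)
      (interactionPower (fun r => f1 r - f0 r) (fun i => x i t) fun i => v i t) t := fun t ht =>
    ((hasDerivAt_pairPotentialSum hU (fun i => hx i t ht.1) (hI t ht)).div_const 2).congr_deriv
      (by ring)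
  have hS' : ∀ t ∈ Icc 0 T, 2 * ∑ i, ⟪v i t,
        flockAccel (fun i j => a i j t) f0 f1 (Λ t) (fun i => x i t) (fun i => v i t) i⟫ ≤
      -2 * √(velocityDispersion fun i => v i t) *
        interactionPower (fun r => f1 r - f0 r) (fun i => x i t) fun i => v i t := fun t _ => by
    have := sum_inner_flockAccel_le (X := fun i => x i t) (V := fun i => v i t) (Λ := Λ t)
      (f0 := f0) (f1 := f1) (fun i j => ha i j t) (fun i j => ha0 i j t)
    rw [← hΛ t]
    linarith
  have hP' : ∀ t ∈ Icc 0 T,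
      |interactionPower (fun r => f1 r - f0 r) (fun i => x i t) fun i => v i t| ≤
        √k * C * √(velocityDispersion fun i => v i t) := fun t ht =>
    (abs_interactionPower_le _).trans
      (by gcongr; exact (le_abs_self _).trans ((Real.norm_eq_abs _).symm.trans_le (hC t ht)))
  have := antitoneOn_sqrt_add (convex_Icc 0 T) (by positivity) hS0 hS hP hS' hP'
    ⟨le_rfl, hT⟩ ⟨hT, le_rfl⟩ hT
  simpa only [← hΛ] using this

theorem stmt_8_general
    {n k : ℕ}
    (K σ β d0 d1 : ℝ) (θ : ℕ)
    (hK : 0 < K) (hθ2 : 2 ≤ θ) (hθeven : Even θ)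
    (x v : Fin k → ℝ → EuclideanSpace ℝ (Fin n))
    (f0 f1 : ℝ → ℝ)
    (hf0 : ∀ r, f0 r = ((r - d0) ^ θ)⁻¹)
    (hf1 : ∀ r, f1 r = ((r - d1) ^ θ)⁻¹)
    (a : Fin k → Fin k → ℝ → ℝ)
    (ha : ∀ i j t, a i j t = K / (σ ^ 2 + ‖x i t - x j t‖ ^ 2) ^ β)
    (Λ : ℝ → ℝ)
    (hΛ : ∀ t, Λ t = Real.sqrt ((1 / (k : ℝ)) *
      ∑ i : Fin k, ∑ j ∈ Finset.univ.filter (fun j => j < i), ‖v i t - v j t‖ ^ 2))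
    (hx : ∀ i, ∀ t : ℝ, 0 ≤ t → HasDerivAt (x i) (v i t) t)
    (hv : ∀ i, ∀ t : ℝ, 0 ≤ t → HasDerivAt (v i)
      ((∑ j : Fin k, a i j t • (v j t - v i t)) +
        Λ t • (∑ j ∈ Finset.univ.filter (fun j => j ≠ i),
          f0 (‖x i t - x j t‖ ^ 2) • (x i t - x j t)) +
        Λ t • (∑ j ∈ Finset.univ.filter (fun j => j ≠ i),
          f1 (‖x i t - x j t‖ ^ 2) • (x j t - x i t))) t)
    (hinit : ∀ i j : Fin k, i ≠ j →
      d0 < ‖x i 0 - x j 0‖ ^ 2 ∧ ‖x i 0 - x j 0‖ ^ 2 < d1)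
    :
    ∀ t : ℝ, 0 ≤ t → ∀ i j : Fin k, i ≠ j →
      d0 < ‖x i t - x j t‖ ^ 2 ∧ ‖x i t - x j t‖ ^ 2 < d1 := by
  set U := barrierPotential d0 d1 θ
  have hU : ∀ r ∈ Ioo d0 d1, HasDerivAt U (f1 r - f0 r) r := fun r hr => by
    rw [hf0, hf1]
    exact hasDerivAt_barrierPotential hθ2 hθeven hr.1.ne' hr.2.ne
  have hg : ContinuousOn (fun r => f1 r - f0 r) (Ioo d0 d1) := by
    simpa only [hf0, hf1] using continuousOn_inv_pow_sub_inv_pow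
  have ha_symm : ∀ i j t, a i j t = a j i t := fun i j t => by rw [ha, ha, norm_sub_rev]
  have ha0 : ∀ i j t, 0 ≤ a i j t := fun i j t => by rw [ha]; positivity
  obtain ⟨δ, hδ, hUδ⟩ := exists_mem_Icc_of_barrierPotential_le (d0 := d0) (d1 := d1) hθ2
    (2 * Λ 0 + pairPotentialSum U fun i => x i 0)
  refine ContinuousOn.forall_mem_of_apriori_bound (γ := fun t i => x i t)
    (U := sqDistsIn (Ioo d0 d1)) (F := sqDistsIn (Icc (d0 + δ) (d1 - δ)))
    (continuousOn_pi.2 fun i t ht => (hx i t ht).continuousAt.continuousWithinAt)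
    isOpen_Ioo.sqDistsIn isClosed_Icc.sqDistsIn
    (sqDistsIn_mono (Icc_subset_Ioo (by linarith) (by linarith))) hinit fun T hT hI i j hij => ?_
  have hE := flock_energy_le hT hU hg ha_symm ha0 hΛ hx hv hI
  have hUT := pairPotential_le_pairPotentialSum
    (fun r hr => barrierPotential_nonneg (by omega : 1 ≤ θ) hr) (hI T ⟨hT, le_rfl⟩) hij
  have hΛT : 0 ≤ Λ T := (hΛ T).symm ▸ Real.sqrt_nonneg _
  exact hUδ _ (hI T ⟨hT, le_rfl⟩ i j hij) (by linarith)

theorem stmt_8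
    {n k : ℕ} (hn : 1 ≤ n) (hk : 2 ≤ k)
    (K σ β d0 d1 : ℝ) (θ : ℕ)
    (hK : 0 < K) (hσ : 0 < σ) (hβ0 : 0 < β) (hβ : β ≤ 1 / 2)
    (hd0 : 0 < d0) (hd01 : d0 < d1) (hθ2 : 2 ≤ θ) (hθeven : Even θ)
    (x v : Fin k → ℝ → EuclideanSpace ℝ (Fin n))
    (f0 f1 : ℝ → ℝ)
    (hf0 : ∀ r, f0 r = ((r - d0) ^ θ)⁻¹)
    (hf1 : ∀ r, f1 r = ((r - d1) ^ θ)⁻¹)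
    (a : Fin k → Fin k → ℝ → ℝ)
    (ha : ∀ i j t, a i j t = K / (σ ^ 2 + ‖x i t - x j t‖ ^ 2) ^ β)
    (Λ : ℝ → ℝ)
    (hΛ : ∀ t, Λ t = Real.sqrt ((1 / (k : ℝ)) *
      ∑ i : Fin k, ∑ j ∈ Finset.univ.filter (fun j => j < i), ‖v i t - v j t‖ ^ 2))
    (hx : ∀ i, ∀ t : ℝ, 0 ≤ t → HasDerivAt (x i) (v i t) t)
    (hv : ∀ i, ∀ t : ℝ, 0 ≤ t → HasDerivAt (v i)
      ((∑ j : Fin k, a i j t • (v j t - v i t)) +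
        Λ t • (∑ j ∈ Finset.univ.filter (fun j => j ≠ i),
          f0 (‖x i t - x j t‖ ^ 2) • (x i t - x j t)) +
        Λ t • (∑ j ∈ Finset.univ.filter (fun j => j ≠ i),
          f1 (‖x i t - x j t‖ ^ 2) • (x j t - x i t))) t)
    (hinit : ∀ i j : Fin k, i ≠ j →
      d0 < ‖x i 0 - x j 0‖ ^ 2 ∧ ‖x i 0 - x j 0‖ ^ 2 < d1)
    :
    ∀ t : ℝ, 0 ≤ t → ∀ i j : Fin k, i ≠ j →
      d0 < ‖x i t - x j t‖ ^ 2 ∧ ‖x i t - x j t‖ ^ 2 < d1 :=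
  stmt_8_general K σ β d0 d1 θ hK hθ2 hθeven x v f0 f1 hf0 hf1 a ha Λ hΛ hx hv hinit
end Flock
end
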